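/- Let H be an FH-algebra over a commutative ring k with FH-homomorphism f, right norm t (so f(t) = 1), right modular function m, and antipode S. Then the Nakayama automorphism η of H relative to f and its inverse are given, for all a ∈ H, by η(a) = S²(a ↼ m^{-1}) = (S² a) ↼ m^{-1} and η^{-1}(a) = S^{-2}(a ↼ m) = (S^{-2} a) ↼ m, where m^{-1} = m ∘ S is the convolution inverse of m. -/

import Mathlib

/-!
Because `f` is a right integral, `∑ f(x₁ y) x₂ = S (∑ f(x y₁) y₂)`: as a function of `y` the left
side convolved with `id` is `y ↦ f(x y) 1`, so convolving once more with `S` isolates it.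
For `x = t` this reads `S w = ∑ f(t₁ w) t₂`, and for `y = t` it reads `a ↼ m = S (∑ f(a t₁) t₂)`.
The first identity and the nondegeneracy of `f` give `∑ f(c S⁻¹ t₂) t₁ = c`, whence
`f (c S⁻²(a ↼ m)) = f (a c)`, that is `η (S⁻²(a ↼ m)) = a`.
The other three formulas follow because `m` is a character: `↼ m` and `↼ m ∘ S` are inverse to
each other, `m ∘ S² = m`, and `S²` is a coalgebra map since `S` is an anti-coalgebra map.
-/

open TensorProduct

/-- `(φ, x, y)` is a Frobenius system for the `k`-algebra `A`. -/
def IsFrobeniusSystem (k : Type*) [CommRing k] (A : Type*) [Ring A] [Algebra k A]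
    (φ : A →ₗ[k] k) {n : ℕ} (x y : Fin n → A) : Prop :=
  ∀ a : A, (∑ i, φ (y i * a) • x i = a) ∧ (∑ i, φ (a * x i) • y i = a)

/-- The right action of `H*` on `H`: `a ↼ g = ∑ g(a₁) a₂`. -/
noncomputable def rAct (k : Type*) [CommRing k] (H : Type*) [AddCommGroup H] [Module k H]
    [Coalgebra k H] (g : H →ₗ[k] k) (a : H) : H :=
  (TensorProduct.lid k H) ((TensorProduct.map g LinearMap.id) (Coalgebra.comul (R := k) a))

open Coalgebra HopfAlgebra WithConv

lemma IsFrobeniusSystem.eq_of_forall_apply_mul_eq {k A : Type*} [CommRing k] [Ring A]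
    [Algebra k A] {φ : A →ₗ[k] k} {n : ℕ} {x y : Fin n → A} (h : IsFrobeniusSystem k A φ x y)
    {b b' : A} (hb : ∀ c, φ (b * c) = φ (b' * c)) : b = b' := by
  rw [← (h b).2, ← (h b').2]
  simp_rw [hb]

namespace HopfAlgebra

variable {k H A : Type*} [CommSemiring k] [Semiring H] [HopfAlgebra k H]

lemma toConv_algHom_comp_antipode_mul_self [Semiring A] [Algebra k A] (φ : H →ₐ[k] A) :
    toConv (φ.toLinearMap ∘ₗ antipode k) * toConv φ.toLinearMap = 1 := by
  have := LinearMap.algHom_comp_convMul_distrib φ (toConv (antipode k)) (toConv .id)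
  rw [LinearMap.antipode_mul_id, ofConv_toConv, ofConv_toConv, LinearMap.comp_id] at this
  rw [← toConv_ofConv (_ * _), ← this]
  ext; simp

lemma toConv_algHom_mul_comp_antipode [Semiring A] [Algebra k A] (φ : H →ₐ[k] A) :
    toConv φ.toLinearMap * toConv (φ.toLinearMap ∘ₗ antipode k) = 1 := by
  have := LinearMap.algHom_comp_convMul_distrib φ (toConv .id) (toConv (antipode k))
  rw [LinearMap.id_mul_antipode, ofConv_toConv, ofConv_toConv, LinearMap.comp_id] at this
  rw [← toConv_ofConv (_ * _), ← this]
  ext; simp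

lemma algHom_apply_antipode_antipode [CommSemiring A] [Algebra k A] (φ : H →ₐ[k] A) (a : H) :
    φ (antipode k (antipode k a)) = φ a := by
  let ψ : H →ₐ[k] A := .ofLinearMap (φ.toLinearMap ∘ₗ antipode k) (by simp)
    fun a b ↦ by simp [antipode_mul_antidistrib, mul_comm]
  have := left_inv_eq_right_inv (toConv_algHom_comp_antipode_mul_self ψ)
    (toConv_algHom_comp_antipode_mul_self φ)
  exact congr($(this).ofConv a)

open Algebra.TensorProduct in
lemma comul_antipode (a : H) :
    comul (R := k) (antipode k a) =
      map (antipode k) (antipode k) (TensorProduct.comm k H H (comul a)) := by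
  let L : H →ₐ[k] H ⊗[k] H := includeLeft
  let R : H →ₐ[k] H ⊗[k] H := includeRight
  have hcomul :
      toConv (comul (R := k) (A := H)) = toConv L.toLinearMap * toConv R.toLinearMap := by
    ext a
    simp [(ℛ k a).convMul_apply, L, R, ← (ℛ k a).eq]
  -- `a ↦ ∑ S a₂ ⊗ S a₁` is `(R ∘ S) * (L ∘ S)`, a left convolution inverse of `Δ = L * R`.
  have hleft : toConv (R.toLinearMap ∘ₗ antipode k) * toConv (L.toLinearMap ∘ₗ antipode k) *
      toConv (comul (R := k) (A := H)) = 1 := by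
    rw [hcomul, mul_assoc, ← mul_assoc _ (toConv L.toLinearMap),
      toConv_algHom_comp_antipode_mul_self, one_mul, toConv_algHom_comp_antipode_mul_self]
  have := congr($(left_inv_eq_right_inv hleft LinearMap.comul_right_inv).ofConv a)
  simpa [(ℛ k a).convMul_apply, L, R, ← (ℛ k a).eq] using this.symm

lemma comul_antipode_antipode (a : H) :
    comul (R := k) (antipode k (antipode k a)) =
      map (antipode k ∘ₗ antipode k) (antipode k ∘ₗ antipode k) (comul a) := by
  rw [comul_antipode, comul_antipode, ← map_comm, comm_comm, map_map]

end HopfAlgebra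

section rAct

variable {k H ι : Type*} [CommRing k]

section Coalgebra

variable [AddCommGroup H] [Module k H] [Coalgebra k H]

lemma rAct_eq_sum (g : H →ₗ[k] k) {a : H} (r : Repr k a ι) :
    rAct k H g a = ∑ i ∈ r.index, g (r.left i) • r.right i := by
  simp [rAct, ← r.eq, map_sum]

lemma coe_rAct (g : H →ₗ[k] k) :
    rAct k H g = ⇑(TensorProduct.lid k H ∘ₗ map g .id ∘ₗ comul) := rfl

lemma rAct_counit (a : H) : rAct k H counit a = a := by
  rw [rAct_eq_sum _ (ℛ k a)]
  exact sum_counit_smul _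

lemma rAct_rAct (g h : H →ₗ[k] k) (a : H) :
    rAct k H h (rAct k H g a) = rAct k H (toConv g * toConv h).ofConv a := by
  let r := ℛ k a
  have coassoc := congr(TensorProduct.lid k H (map g (TensorProduct.lid k H ∘ₗ map h .id)
    $(sum_tmul_tmul_eq r (fun i ↦ ℛ k (r.left i)) (fun i ↦ ℛ k (r.right i)))))
  simp only [map_sum, map_tmul, LinearMap.comp_apply, lid_tmul, LinearMap.id_apply] at coassoc
  have hconv : ∀ i, (toConv g * toConv h).ofConv (r.left i) =
      ∑ j ∈ (ℛ k (r.left i)).index, g ((ℛ k (r.left i)).left j) * h ((ℛ k (r.left i)).right j) :=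
    fun i ↦ (ℛ k (r.left i)).convMul_apply _ _
  rw [rAct_eq_sum g r, coe_rAct h, map_sum]
  simp_rw [map_smul, ← coe_rAct]
  rw [rAct_eq_sum _ r]
  simp_rw [hconv, rAct_eq_sum h (ℛ k (r.right _)), Finset.sum_smul, Finset.smul_sum, ← smul_smul]
  simpa using coassoc.symm

end Coalgebra

variable [Ring H] [HopfAlgebra k H]

lemma rAct_comp_antipode_rAct (φ : H →ₐ[k] k) (a : H) :
    rAct k H (φ.toLinearMap ∘ₗ antipode k) (rAct k H φ.toLinearMap a) = a := by
  rw [rAct_rAct, toConv_algHom_mul_comp_antipode]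
  exact rAct_counit a

lemma rAct_antipode_antipode {g : H →ₗ[k] k} (hg : ∀ a, g (antipode k (antipode k a)) = g a)
    (a : H) :
    rAct k H g (antipode k (antipode k a)) = antipode k (antipode k (rAct k H g a)) := by
  simp [rAct, comul_antipode_antipode, ← (ℛ k a).eq, map_sum, hg]

lemma rAct_comp_mulRight_eq_antipode (f : H →ₗ[k] k) (hf : ∀ a, rAct k H f a = f a • 1)
    (x y : H) :
    rAct k H (f ∘ₗ LinearMap.mulRight k y) x =
      antipode k (rAct k H (f ∘ₗ LinearMap.mulLeft k x) y) := by
  let r := ℛ k x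
  let P : H →ₗ[k] H :=
    ∑ i ∈ r.index, (f ∘ₗ LinearMap.mulLeft k (r.left i)).smulRight (r.right i)
  have hP : ∀ y, P y = rAct k H (f ∘ₗ LinearMap.mulRight k y) x := fun y ↦ by
    simp [P, rAct_eq_sum _ r]
  have hPid : toConv P * toConv .id =
      toConv (Algebra.linearMap k H ∘ₗ f ∘ₗ LinearMap.mulLeft k x) := by
    ext y
    rw [(ℛ k y).convMul_apply]
    simp [Algebra.algebraMap_eq_smul_one, ← hf, rAct_eq_sum f (r.mul (ℛ k y)), P,
      Finset.sum_product, Finset.sum_mul]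
    exact Finset.sum_comm
  have := congrArg (fun F ↦ (F * toConv (antipode k)).ofConv y) hPid
  simp only [mul_assoc, LinearMap.id_mul_antipode, mul_one, (ℛ k y).convMul_apply] at this
  simp [← hP, this, rAct_eq_sum _ (ℛ k y), map_sum, Algebra.algebraMap_eq_smul_one]

end rAct

section FHAlgebra

variable {k H ι : Type*} [CommRing k] [Ring H] [HopfAlgebra k H]
  (f : H →ₗ[k] k) (hnd : ∀ b b' : H, (∀ c, f (b * c) = f (b' * c)) → b = b')
  {t : H} (ht : ∀ a, f (t * a) = counit (R := k) a)
include hnd ht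

lemma norm_mul_eq_counit_smul (c : H) : t * c = counit (R := k) c • t :=
  hnd _ _ fun d ↦ by simp [mul_assoc, ht]

lemma mul_norm_eq_smul (a : H) : a * t = f (a * t) • t :=
  hnd _ _ fun d ↦ by
    rw [mul_assoc, norm_mul_eq_counit_smul f hnd ht, smul_mul_assoc, mul_smul_comm, map_smul,
      map_smul, ht, smul_eq_mul, smul_eq_mul, mul_comm]

lemma apply_mul_mul_norm (a b : H) : f (a * b * t) = f (a * t) * f (b * t) := by
  conv_lhs => rw [mul_assoc, mul_norm_eq_smul f hnd ht b, mul_smul_comm, map_smul, smul_eq_mul]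
  exact mul_comm _ _

variable (hf : ∀ a, rAct k H f a = f a • 1)
include hf

omit hnd in
lemma antipode_eq_rAct_norm (w : H) :
    antipode k w = rAct k H (f ∘ₗ LinearMap.mulRight k w) t := by
  have : f ∘ₗ LinearMap.mulLeft k t = counit := by ext; simp [ht]
  rw [rAct_comp_mulRight_eq_antipode f hf, this, rAct_counit]

variable {Sinv : H →ₗ[k] H} (hS : ∀ a, Sinv (antipode k a) = a)
include hS

lemma sum_apply_mul_antipodeInv_smul (r : Repr k t ι) (c : H) :
    ∑ j ∈ r.index, f (c * Sinv (r.right j)) • r.left j = c := by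
  refine hnd _ _ fun d ↦ ?_
  conv_rhs => rw [← hS d, antipode_eq_rAct_norm f ht hf d, rAct_eq_sum _ r]
  simp [Finset.sum_mul, Finset.mul_sum, mul_comm]

lemma apply_mul_antipodeInv_rAct (a c : H) :
    f (c * Sinv (rAct k H (f ∘ₗ LinearMap.mulLeft k a) t)) = f (a * c) := by
  rw [rAct_eq_sum _ (ℛ k t)]
  conv_rhs => rw [← sum_apply_mul_antipodeInv_smul f hnd ht hf hS (ℛ k t) c]
  simp [Finset.mul_sum, mul_comm]

lemma nakayama_symm_eq {η : H ≃ₐ[k] H} (hη : ∀ a c, f (η a * c) = f (c * a)) (a : H) :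
    η.symm a = Sinv (Sinv (rAct k H (f ∘ₗ LinearMap.mulRight k t) a)) := by
  rw [AlgEquiv.symm_apply_eq]
  refine hnd _ _ fun c ↦ ?_
  rw [hη, rAct_comp_mulRight_eq_antipode f hf, hS, apply_mul_antipodeInv_rAct f hnd ht hf hS]

end FHAlgebra

theorem stmt_6_general (k : Type*) [CommRing k] (H : Type*) [Ring H] [HopfAlgebra k H]
    (f : H →ₗ[k] k) (nn : ℕ) (x y : Fin nn → H) (hsys : IsFrobeniusSystem k H f x y)
    (hri : ∀ a : H,
      (TensorProduct.lid k H) ((TensorProduct.map f LinearMap.id) (Coalgebra.comul (R := k) a))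
        = f a • (1 : H))
    (Sinv : H →ₗ[k] H)
    (hS1 : ∀ a : H, Sinv (HopfAlgebra.antipode (R := k) a) = a)
    (hS2 : ∀ a : H, HopfAlgebra.antipode (R := k) (Sinv a) = a)
    (t : H) (ht : ∀ a : H, f (t * a) = Coalgebra.counit (R := k) a) (hft : f t = 1)
    (m : H →ₗ[k] k) (hm : ∀ a : H, m a = f (a * t))
    (η : H ≃ₐ[k] H) (hη : ∀ a c : H, f (η a * c) = f (c * a)) :
    ∀ a : H,
      η a = HopfAlgebra.antipode (R := k)
          (HopfAlgebra.antipode (R := k) (rAct k H (m ∘ₗ HopfAlgebra.antipode (R := k)) a)) ∧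
      η a = rAct k H (m ∘ₗ HopfAlgebra.antipode (R := k))
          (HopfAlgebra.antipode (R := k) (HopfAlgebra.antipode (R := k) a)) ∧
      η.symm a = Sinv (Sinv (rAct k H m a)) ∧
      η.symm a = rAct k H m (Sinv (Sinv a)) := by
  intro a
  have hnd : ∀ b b' : H, (∀ c, f (b * c) = f (b' * c)) → b = b' :=
    fun _ _ ↦ hsys.eq_of_forall_apply_mul_eq
  let μ : H →ₐ[k] k := .ofLinearMap m (by rw [hm, one_mul, hft])
    fun a b ↦ by simp only [hm, apply_mul_mul_norm f hnd ht]
  have hinv (w : H) : rAct k H (m ∘ₗ antipode k) (rAct k H m w) = w :=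
    rAct_comp_antipode_rAct μ w
  have h3 (w : H) : η.symm w = Sinv (Sinv (rAct k H m w)) := by
    rw [show m = f ∘ₗ LinearMap.mulRight k t from LinearMap.ext hm]
    exact nakayama_symm_eq f hnd ht hri hS1 hη w
  have h4 (w : H) : η.symm w = rAct k H m (Sinv (Sinv w)) := by
    have hinj : Function.Injective fun w ↦ antipode k (antipode k w) :=
      fun u v huv ↦ by simpa [hS1] using congr(Sinv (Sinv $huv))
    rw [h3]
    apply hinj
    simp only [hS2]
    rw [← rAct_antipode_antipode (algHom_apply_antipode_antipode μ), hS2, hS2]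
  refine ⟨?_, ?_, h3 a, h4 a⟩
  · have := h4 (η a)
    rw [η.symm_apply_apply] at this
    conv_rhs => rw [this, hinv, hS2, hS2]
  · have := h3 (η a)
    rw [η.symm_apply_apply] at this
    conv_rhs => rw [this, hS2, hS2, hinv]

/-- Let `H` be an FH-algebra over a commutative ring `k` with FH-homomorphism `f` (a Frobenius
homomorphism which is a right integral in `H*`), right norm `t` (so `f (t * a) = ε a` and
`f t = 1`), right modular function `m a = f (a * t)` with convolution inverse `m⁻¹ = m ∘ S`,
inverse antipode `Sinv`, and Nakayama automorphism `η` relative to `f`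
(`f (η a * c) = f (c * a)`).  Then `η a = S²(a ↼ m⁻¹) = (S² a) ↼ m⁻¹` and
`η⁻¹ a = S⁻²(a ↼ m) = (S⁻² a) ↼ m`. -/
theorem stmt_6 (k : Type*) [CommRing k] (H : Type*) [Ring H] [HopfAlgebra k H]
    (hfin : Module.Finite k H) (hproj : Module.Projective k H)
    (f : H →ₗ[k] k) (nn : ℕ) (x y : Fin nn → H) (hsys : IsFrobeniusSystem k H f x y)
    (hri : ∀ a : H,
      (TensorProduct.lid k H) ((TensorProduct.map f LinearMap.id) (Coalgebra.comul (R := k) a))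
        = f a • (1 : H))
    (Sinv : H →ₗ[k] H)
    (hS1 : ∀ a : H, Sinv (HopfAlgebra.antipode (R := k) a) = a)
    (hS2 : ∀ a : H, HopfAlgebra.antipode (R := k) (Sinv a) = a)
    (t : H) (ht : ∀ a : H, f (t * a) = Coalgebra.counit (R := k) a) (hft : f t = 1)
    (m : H →ₗ[k] k) (hm : ∀ a : H, m a = f (a * t))
    (η : H ≃ₐ[k] H) (hη : ∀ a c : H, f (η a * c) = f (c * a)) :
    ∀ a : H,
      η a = HopfAlgebra.antipode (R := k)
          (HopfAlgebra.antipode (R := k) (rAct k H (m ∘ₗ HopfAlgebra.antipode (R := k)) a)) ∧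
      η a = rAct k H (m ∘ₗ HopfAlgebra.antipode (R := k))
          (HopfAlgebra.antipode (R := k) (HopfAlgebra.antipode (R := k) a)) ∧
      η.symm a = Sinv (Sinv (rAct k H m a)) ∧
      η.symm a = rAct k H m (Sinv (Sinv a)) :=
  stmt_6_general k H f nn x y hsys hri Sinv hS1 hS2 t ht hft m hm η hη
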